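/- Let K ≥ 2, β > 0, let P be a preference matrix of size K, and let S ⊆ {1,…,K} be a dominant set of P (nonempty with P_{ij} > 1/2 for all i ∈ S and j ∉ S) that is inclusion-minimal among dominant sets (the Smith set of P). Then there exists a full-support sampling distribution μ ∈ Δ_K° such that the IPO solution with uniform reference, π* = softmax(βPμ), satisfies π*_i > π*_j for every i ∈ S and every j ∉ S. -/

import Mathlib

open Finset

/-- softmax of a vector of logits. -/
noncomputable def softmax {K : ℕ} (z : Fin K → ℝ) : Fin K → ℝ :=
  fun i => Real.exp (z i) / ∑ k, Real.exp (z k)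

/-- A preference matrix: entries in [0,1], 1/2 on the diagonal, and `P i j + P j i = 1`. -/
def IsPrefMatrix {K : ℕ} (P : Matrix (Fin K) (Fin K) ℝ) : Prop :=
  (∀ i j, 0 ≤ P i j ∧ P i j ≤ 1) ∧ (∀ i, P i i = 1/2) ∧ ∀ i j, i ≠ j → P i j + P j i = 1

/-- Membership in the interior Δ_K° of the probability simplex (full support). -/
def InSimplexInterior {K : ℕ} (μ : Fin K → ℝ) : Prop :=
  (∀ i, 0 < μ i) ∧ ∑ i, μ i = 1

/-- A nonempty set `S` is dominant for `P` if `P i j > 1/2` for all `i ∈ S`, `j ∉ S`. -/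
def Dominant {K : ℕ} (P : Matrix (Fin K) (Fin K) ℝ) (S : Finset (Fin K)) : Prop :=
  S.Nonempty ∧ ∀ i ∈ S, ∀ j ∉ S, (1:ℝ)/2 < P i j

lemma exists_good_weights {ι : Type*} [Fintype ι] [DecidableEq ι] [Nonempty ι]
    (M : ι → ι → ℝ) (hM : ∀ i j, M i j = - M j i) :
    ∃ w : ι → ℝ, (∀ k, 0 ≤ w k) ∧ ∑ k, w k = 1 ∧ ∀ i, 0 ≤ ∑ k, M i k * w k := by
  classical
  set cols : ι → (ι → ℝ) := fun k i => M i k with hcols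
  set s : Set (ι → ℝ) := convexHull ℝ (Set.range cols) with hs
  set t : Set (ι → ℝ) := Set.pi Set.univ (fun _ => Set.Ici (0:ℝ)) with ht
  have hst : ¬ Disjoint s t := by
    intro hdisj
    obtain ⟨f, u, v, hfu, huv, hfv⟩ := geometric_hahn_banach_compact_closed
      (convex_convexHull ℝ _) ((Set.finite_range cols).isCompact_convexHull (𝕜 := ℝ))
      (convex_pi fun i _ => convex_Ici 0) (isClosed_set_pi fun i _ => isClosed_Ici) hdisj
    have h0t : (0 : ι → ℝ) ∈ t := fun i _ => by simp
    have hv0 : v < 0 := by simpa using hfv 0 h0t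
    have hft : ∀ b ∈ t, 0 ≤ f b := by
      intro b hb
      by_contra h
      push_neg at h
      have hc : 0 < (v - 1) / f b := div_pos_of_neg_of_neg (by linarith) h
      have hmem : ((v-1)/ f b) • b ∈ t := fun i _ => mul_nonneg hc.le (hb i trivial)
      have h2 := hfv _ hmem
      rw [map_smul, smul_eq_mul, div_mul_cancel₀ _ (ne_of_lt h)] at h2
      linarith
    set p : ι → ℝ := fun i => f (Pi.single i 1) with hp
    have hp0 : ∀ i, 0 ≤ p i := by
      intro i
      refine hft _ (fun j _ => ?_)
      rcases eq_or_ne j i with rfl|h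
      · simp
      · simp [Pi.single_apply, h]
    have hflin : ∀ x : ι → ℝ, f x = ∑ i, x i * p i := by
      intro x
      conv_lhs => rw [pi_eq_sum_univ x]
      rw [map_sum]
      refine Finset.sum_congr rfl fun i _ => ?_
      rw [map_smul, smul_eq_mul, hp]
      congr 2
      ext j
      simp [Pi.single_apply, eq_comm]
    have hcol : ∀ k, ∑ i, M i k * p i < 0 := by
      intro k
      have hmem : cols k ∈ s := subset_convexHull ℝ _ ⟨k, rfl⟩
      have h2 := hfu _ hmem
      rw [hflin] at h2
      have : ∑ i, cols k i * p i = ∑ i, M i k * p i := rfl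
      linarith [this ▸ h2]
    -- the double sum is zero by antisymmetry
    set T : ℝ := ∑ k, ∑ i, p k * M i k * p i with hTdef
    have hT : T = -T := by
      rw [hTdef]
      conv_lhs => rw [Finset.sum_comm]
      rw [← Finset.sum_neg_distrib]
      refine Finset.sum_congr rfl fun a _ => ?_
      rw [← Finset.sum_neg_distrib]
      refine Finset.sum_congr rfl fun b _ => ?_
      rw [hM a b]; ring
    have hT0 : T = 0 := by linarith
    by_cases hall : ∀ k, p k = 0
    · obtain ⟨k⟩ := ‹Nonempty ι›
      have := hcol k
      simp [hall] at this
    · push_neg at hall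
      obtain ⟨k0, hk0⟩ := hall
      have hk0' : 0 < p k0 := lt_of_le_of_ne (hp0 k0) (Ne.symm hk0)
      have hTneg : T < 0 := by
        rw [hTdef]
        have : ∀ k, ∑ i, p k * M i k * p i = p k * ∑ i, M i k * p i := by
          intro k; rw [Finset.mul_sum]; exact Finset.sum_congr rfl fun i _ => by ring
        calc (∑ k, ∑ i, p k * M i k * p i) = ∑ k, p k * ∑ i, M i k * p i :=
              Finset.sum_congr rfl fun k _ => this k
          _ < ∑ _k : ι, (0:ℝ) := by
              refine Finset.sum_lt_sum (fun k _ => mul_nonpos_of_nonneg_of_nonpos (hp0 k) (hcol k).le)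
                ⟨k0, Finset.mem_univ _, mul_neg_of_pos_of_neg hk0' (hcol k0)⟩
          _ = 0 := by simp
      linarith
  obtain ⟨y, hys, hyt⟩ := Set.not_disjoint_iff.mp hst
  rw [hs, convexHull_range_eq_exists_affineCombination] at hys
  obtain ⟨F, w, hw0, hw1, hy⟩ := hys
  rw [affineCombination_eq_linear_combination F cols w hw1] at hy
  refine ⟨fun k => if k ∈ F then w k else 0, fun k => ?_, ?_, fun i => ?_⟩
  · dsimp only
    split
    · exact hw0 _ ‹_›
    · exact le_rfl
  · simp only [Finset.sum_ite_mem, Finset.univ_inter]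
    exact hw1
  · have h0 : 0 ≤ y i := hyt i trivial
    have h2 := congrFun hy i
    simp only [Finset.sum_apply, Pi.smul_apply, smul_eq_mul, hcols] at h2
    have h3 : ∑ k, M i k * (if k ∈ F then w k else 0) = ∑ k ∈ F, w k * M i k := by
      simp only [mul_ite, mul_zero]
      rw [Finset.sum_ite_mem, Finset.univ_inter]
      exact Finset.sum_congr rfl fun k _ => mul_comm _ _
    rw [h3, h2]
    exact h0

lemma softmax_lt {K : ℕ} (hK : 0 < K) (z : Fin K → ℝ) {i j : Fin K} (h : z j < z i) :
    softmax z j < softmax z i := by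
  have hD : 0 < ∑ k, Real.exp (z k) :=
    Finset.sum_pos (fun k _ => Real.exp_pos _) ⟨⟨0, hK⟩, Finset.mem_univ _⟩
  unfold softmax
  gcongr

theorem smith_set_top_main
    (K : ℕ) (hK : 2 ≤ K) (β : ℝ) (hβ : 0 < β)
    (P : Matrix (Fin K) (Fin K) ℝ) (hP : IsPrefMatrix P)
    (S : Finset (Fin K)) (hS : Dominant P S) :
    ∃ μ : Fin K → ℝ, InSimplexInterior μ ∧
      ∀ i ∈ S, ∀ j ∉ S,
        softmax (fun l => β * ∑ k, P l k * μ k) j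
          < softmax (fun l => β * ∑ k, P l k * μ k) i := by
  classical
  have hK0 : 0 < K := by omega
  have hKpos : (0:ℝ) < K := Nat.cast_pos.mpr hK0
  have hKne : (K:ℝ) ≠ 0 := ne_of_gt hKpos
  obtain ⟨i0, hi0⟩ := hS.1
  haveI : Nonempty {x // x ∈ S} := ⟨⟨i0, hi0⟩⟩
  set M : {x // x ∈ S} → {x // x ∈ S} → ℝ := fun i k => P i.1 k.1 - 1/2 with hMdef
  have hM : ∀ i j, M i j = - M j i := by
    intro i j
    rcases eq_or_ne i j with rfl | hne
    · simp [hMdef, hP.2.1]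
    · have h2 : P i.1 j.1 + P j.1 i.1 = 1 := hP.2.2 _ _ (fun h => hne (Subtype.ext h))
      simp only [hMdef]
      linarith
  obtain ⟨w, hw0, hw1, hwge⟩ := exists_good_weights M hM
  set w' : Fin K → ℝ := fun k => if h : k ∈ S then w ⟨k, h⟩ else 0 with hw'def
  have hw'0 : ∀ k, 0 ≤ w' k := by
    intro k
    rw [hw'def]
    dsimp only
    split
    · exact hw0 _
    · exact le_rfl
  have hconv : ∀ g : Fin K → ℝ, ∑ k, g k * w' k = ∑ x : {x // x ∈ S}, g x.1 * w x := by
    intro g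
    rw [← Finset.sum_subset (Finset.subset_univ S)
      (by intro k _ hk; simp [hw'def, hk])]
    rw [← Finset.sum_attach S (fun k => g k * w' k), Finset.univ_eq_attach]
    refine Finset.sum_congr rfl fun x _ => ?_
    simp [hw'def, x.2]
  have hw'sum : ∑ k, w' k = 1 := by
    have h := hconv (fun _ => 1)
    simp only [one_mul] at h
    rw [h, hw1]
  have hSge : ∀ i ∈ S, 1/2 ≤ ∑ k, P i k * w' k := by
    intro i hi
    rw [hconv (fun k => P i k)]
    have h1 := hwge ⟨i, hi⟩
    have h2 : ∑ x : {x // x ∈ S}, P i x.1 * w x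
        = (∑ x : {x // x ∈ S}, M ⟨i, hi⟩ x * w x) + 1/2 := by
      have h3 : ∀ x : {x // x ∈ S}, P i x.1 * w x = M ⟨i, hi⟩ x * w x + (1/2) * w x := by
        intro x
        simp only [hMdef]
        ring
      rw [Finset.sum_congr rfl fun x _ => h3 x, Finset.sum_add_distrib, ← Finset.mul_sum, hw1]
      ring
    rw [h2]
    linarith
  have hSlt : ∀ j ∉ S, ∑ k, P j k * w' k < 1/2 := by
    intro j hj
    rw [hconv (fun k => P j k)]
    have hterm : ∀ x : {x // x ∈ S}, P j x.1 < 1/2 := by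
      intro x
      have h1 : (1:ℝ)/2 < P x.1 j := hS.2 x.1 x.2 j hj
      have hne : x.1 ≠ j := fun h => hj (h ▸ x.2)
      have h2 : P x.1 j + P j x.1 = 1 := hP.2.2 _ _ hne
      linarith
    obtain ⟨x0, hx0⟩ : ∃ x, 0 < w x := by
      by_contra h
      push_neg at h
      have : ∑ x, w x ≤ 0 := Finset.sum_nonpos fun x _ => h x
      linarith
    calc ∑ x : {x // x ∈ S}, P j x.1 * w x < ∑ x : {x // x ∈ S}, 1/2 * w x := by
          refine Finset.sum_lt_sum (fun x _ => mul_le_mul_of_nonneg_right (hterm x).le (hw0 x))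
            ⟨x0, Finset.mem_univ _, mul_lt_mul_of_pos_right (hterm x0) hx0⟩
      _ = 1/2 := by rw [← Finset.mul_sum, hw1, mul_one]
  have hμ : ∀ ε : ℝ, 0 < ε → ε < 1 →
      InSimplexInterior (fun k => (1-ε) * w' k + ε / K) := by
    intro ε hε0 hε1
    constructor
    · intro k
      have h1 : 0 < ε / K := div_pos hε0 hKpos
      have h2 := mul_nonneg (by linarith : (0:ℝ) ≤ 1 - ε) (hw'0 k)
      dsimp only
      linarith
    · rw [Finset.sum_add_distrib, ← Finset.mul_sum, hw'sum, Finset.sum_const,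
        Finset.card_univ, Fintype.card_fin, nsmul_eq_mul]
      field_simp
      ring
  have hscore : ∀ ε : ℝ, ∀ l, ∑ k, P l k * ((1-ε) * w' k + ε / K)
      = (1-ε) * (∑ k, P l k * w' k) + (ε/K) * ∑ k, P l k := by
    intro ε l
    rw [Finset.mul_sum, Finset.mul_sum, ← Finset.sum_add_distrib]
    exact Finset.sum_congr rfl fun k _ => by ring
  have hrow0 : ∀ l, 0 ≤ ∑ k, P l k := fun l => Finset.sum_nonneg fun k _ => (hP.1 l k).1
  have hrowK : ∀ l, ∑ k, P l k ≤ K := by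
    intro l
    calc ∑ k, P l k ≤ ∑ _k : Fin K, (1:ℝ) := Finset.sum_le_sum fun k _ => (hP.1 l k).2
      _ = K := by simp
  rcases (Finset.univ \ S).eq_empty_or_nonempty with hc | hc
  · refine ⟨fun k => (1 - 1/2) * w' k + (1/2) / K, hμ (1/2) (by norm_num) (by norm_num), ?_⟩
    intro i hi j hj
    exact absurd (hc ▸ Finset.mem_sdiff.mpr ⟨Finset.mem_univ j, hj⟩) (Finset.notMem_empty j)
  · obtain ⟨j0, hj0T, hj0min⟩ :=
      Finset.exists_min_image (Finset.univ \ S) (fun j => 1/2 - ∑ k, P j k * w' k) hc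
    set δ : ℝ := 1/2 - ∑ k, P j0 k * w' k with hδdef
    have hδ0 : 0 < δ := by
      have := hSlt j0 (Finset.mem_sdiff.mp hj0T).2
      rw [hδdef]
      linarith
    set ε : ℝ := min (δ/4) (1/2) with hεdef
    have hε0 : 0 < ε := lt_min (div_pos hδ0 (by norm_num)) (by norm_num)
    have hεδ : ε ≤ δ/4 := min_le_left _ _
    have hεh : ε ≤ 1/2 := min_le_right _ _
    have hε1 : ε < 1 := lt_of_le_of_lt hεh (by norm_num)
    refine ⟨fun k => (1-ε) * w' k + ε / K, hμ ε hε0 hε1, ?_⟩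
    intro i hi j hj
    refine softmax_lt hK0 _ ?_
    refine mul_lt_mul_of_pos_left ?_ hβ
    rw [hscore ε i, hscore ε j]
    have h1 : (ε/K) * (∑ k, P j k) ≤ ε := by
      have h := mul_le_mul_of_nonneg_left (hrowK j) (le_of_lt (div_pos hε0 hKpos))
      rwa [div_mul_cancel₀ ε hKne] at h
    have h2 : (0:ℝ) ≤ (ε/K) * (∑ k, P i k) :=
      mul_nonneg (le_of_lt (div_pos hε0 hKpos)) (hrow0 i)
    have hjb : ∑ k, P j k * w' k ≤ 1/2 - δ := by
      have h := hj0min j (Finset.mem_sdiff.mpr ⟨Finset.mem_univ j, hj⟩)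
      linarith
    have h3 : (1-ε) * (∑ k, P j k * w' k) ≤ (1-ε) * (1/2 - δ) :=
      mul_le_mul_of_nonneg_left hjb (by linarith)
    have h4 : (1-ε) * (1/2) ≤ (1-ε) * (∑ k, P i k * w' k) :=
      mul_le_mul_of_nonneg_left (hSge i hi) (by linarith)
    have hq : δ/2 ≤ (1-ε) * δ := by nlinarith
    have hexp : (1-ε) * (1/2 - δ) = (1-ε) * (1/2) - (1-ε) * δ := by ring
    linarith

/-- If `S` is the Smith set of `P` (an inclusion-minimal dominant set), then some
full-support sampling distribution makes the IPO solution (with uniform reference) place every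
member of `S` strictly above every non-member. -/
theorem smith_set_top_for_some_sampling
    (K : ℕ) (hK : 2 ≤ K) (β : ℝ) (hβ : 0 < β)
    (P : Matrix (Fin K) (Fin K) ℝ) (hP : IsPrefMatrix P)
    (S : Finset (Fin K)) (hS : Dominant P S)
    (hmin : ∀ S' : Finset (Fin K), Dominant P S' → S ⊆ S') :
    ∃ μ : Fin K → ℝ, InSimplexInterior μ ∧
      ∀ i ∈ S, ∀ j ∉ S,
        softmax (fun l => β * ∑ k, P l k * μ k) j
          < softmax (fun l => β * ∑ k, P l k * μ k) i := by
  exact smith_set_top_main K hK β hβ P hP S hS
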